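/- Every rooted tree P on n nodes admits, for any integer parameter s > 1, a micro tree decomposition into connected subtrees M₁, …, M_k such that every node of P belongs to some Mᵢ, any two distinct micro trees intersect in at most one node which must be the root of at least one of them, each |V(Mᵢ)| ≤ s, and k = O(⌈n/s⌉) (it suffices to prove k ≤ 4⌈n/s⌉). -/

import Mathlib

open Finset
open scoped Classical

/-- A rooted tree on `n` nodes given by a parent function. -/
structure RTree (n : ℕ) where
  parent : Fin n → Fin n
  root : Fin n
  parent_root : parent root = root
  wf : ∀ v, ∃ k, parent^[k] v = root

namespace RTree

variable {n : ℕ}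

/-- `x` is an ancestor of `v` (possibly `x = v`). -/
def Anc (T : RTree n) (x v : Fin n) : Prop := ∃ k, T.parent^[k] v = x

/-- `z` is a child of `y`. -/
def IsChild (T : RTree n) (z y : Fin n) : Prop := T.parent z = y ∧ z ≠ y

/-- The number of nodes in the subtree rooted at `y`. -/
noncomputable def size (T : RTree n) (y : Fin n) : ℕ :=
  (Finset.univ.filter fun v => T.Anc y v).card

/-- A leaf is a node with no children. -/
def IsLeaf (T : RTree n) (v : Fin n) : Prop := ∀ z, T.parent z = v → z = v

noncomputable def leaves (T : RTree n) : Finset (Fin n) :=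
  Finset.univ.filter fun v => T.IsLeaf v

noncomputable def depth (T : RTree n) (v : Fin n) : ℕ := Nat.find (T.wf v)

/-- The list of labels on the path from the root down to `v`. -/
noncomputable def pathLabels {α : Type*} (T : RTree n) (lab : Fin n → α) (v : Fin n) :
    List α :=
  (List.range (T.depth v + 1)).map fun i => lab (T.parent^[T.depth v - i] v)

/-- The number of light edges on the root-to-`y` path (`hv x = true` iff `x` is heavy). -/
noncomputable def lightdepth (T : RTree n) (hv : Fin n → Bool) (y : Fin n) : ℕ :=
  (Finset.univ.filter fun x => T.Anc x y ∧ x ≠ T.root ∧ hv x = false).card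

end RTree

/-- The `Down` procedure: children of matched nodes together with unmatched nodes. -/
def Down {m : ℕ} {α : Type*} (P : RTree m) (lab : Fin m → α) (X : Set (Fin m)) (a : α) :
    Set (Fin m) :=
  {z | ∃ x ∈ X, lab x = a ∧ P.IsChild z x} ∪ {x ∈ X | lab x ≠ a}

/-!
Clusters are cut off from the bottom of the remaining parent-closed part `R` of the tree. Take a
node `v` that is minimal among those with at least `s` descendants in `R`. The subtrees of its
children have fewer than `s` nodes each and at least `s - 1` in total, so a group of them has
between `s / 2` and `s - 1` nodes; together with `v` they form a micro tree, and deleting them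
(but not `v`) leaves `R` parent-closed. Each micro tree except the last one (all of `R`, once
`|R| ≤ s`) deletes at least `s / 2` nodes, which gives at most `⌈n / ⌊s/2⌋⌉ ≤ 3⌈n/s⌉` micro trees.
-/

namespace RTree

variable {n : ℕ} (P : RTree n)

theorem anc_refl (v : Fin n) : P.Anc v v := ⟨0, rfl⟩

theorem anc_root (v : Fin n) : P.Anc P.root v := P.wf v

theorem anc_parent (v : Fin n) : P.Anc (P.parent v) v := ⟨1, rfl⟩

variable {P}

theorem Anc.trans {x y z : Fin n} (hxy : P.Anc x y) (hyz : P.Anc y z) : P.Anc x z := by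
  obtain ⟨j, rfl⟩ := hxy
  obtain ⟨k, rfl⟩ := hyz
  exact ⟨j + k, Function.iterate_add_apply _ _ _ _⟩

theorem eq_root_of_isPeriodicPt {v : Fin n} {k : ℕ}
    (hv : Function.IsPeriodicPt P.parent (k + 1) v) : v = P.root := by
  obtain ⟨d, hd⟩ := P.wf v
  have hroot : P.parent^[k * d] P.root = P.root := Function.iterate_fixed P.parent_root _
  rw [← hd, ← Function.iterate_add_apply, ← Nat.succ_mul, (hv.mul_const d).eq] at hroot
  exact hroot.trans hd

theorem Anc.antisymm {x y : Fin n} (hxy : P.Anc x y) (hyx : P.Anc y x) : x = y := by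
  obtain ⟨a, rfl⟩ := hxy
  obtain ⟨_ | b, hb⟩ := hyx
  · exact hb
  · have hy : y = P.root := eq_root_of_isPeriodicPt (k := b + a) <| by
      rw [Function.IsPeriodicPt, Function.IsFixedPt, Nat.add_right_comm,
        Function.iterate_add_apply, hb]
    subst hy
    exact Function.iterate_fixed P.parent_root a

theorem Anc.total {x x' y : Fin n} (hx : P.Anc x y) (hx' : P.Anc x' y) :
    P.Anc x x' ∨ P.Anc x' x := by
  obtain ⟨i, rfl⟩ := hx
  obtain ⟨j, rfl⟩ := hx'
  rcases le_total i j with h | h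
  · obtain ⟨e, rfl⟩ := Nat.exists_eq_add_of_le h
    exact .inr ⟨e, by rw [← Function.iterate_add_apply, Nat.add_comm]⟩
  · obtain ⟨e, rfl⟩ := Nat.exists_eq_add_of_le h
    exact .inl ⟨e, by rw [← Function.iterate_add_apply, Nat.add_comm]⟩

theorem Anc.parent_of_ne {c x : Fin n} (h : P.Anc c x) (hne : x ≠ c) : P.Anc c (P.parent x) := by
  obtain ⟨_ | k, hk⟩ := h
  · exact absurd hk hne
  · exact ⟨k, hk⟩

theorem IsChild.not_anc {c v : Fin n} (hc : P.IsChild c v) : ¬ P.Anc c v := fun h =>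
  hc.2 (h.antisymm (hc.1 ▸ P.anc_parent c))

theorem IsChild.anc {c v : Fin n} (hc : P.IsChild c v) : P.Anc v c := hc.1 ▸ P.anc_parent c

theorem Anc.eq_or_exists_isChild {v y : Fin n} (h : P.Anc v y) :
    y = v ∨ ∃ c, P.IsChild c v ∧ P.Anc c y := by
  obtain ⟨k, hk⟩ := h
  induction k generalizing y with
  | zero => exact .inl hk
  | succ k ih =>
    rcases ih hk with hy | ⟨c, hc, hcy⟩
    · by_cases hyv : y = v
      · exact .inl hyv
      · exact .inr ⟨y, ⟨hy, hyv⟩, P.anc_refl y⟩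
    · exact .inr ⟨c, hc, hcy.trans (P.anc_parent y)⟩

theorem IsChild.disjoint_anc {c c' v y : Fin n} (hc : P.IsChild c v) (hc' : P.IsChild c' v)
    (hne : c ≠ c') (hy : P.Anc c y) (hy' : P.Anc c' y) : False := by
  rcases hy.total hy' with h | h
  · exact hc.not_anc (hc'.1 ▸ h.parent_of_ne (Ne.symm hne))
  · exact hc'.not_anc (hc.1 ▸ h.parent_of_ne hne)

end RTree

theorem Finset.exists_subset_sum_mem_Icc {α : Type*} (f : α → ℕ) {h B : ℕ} (hB : 2 * h ≤ B + 2)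
    (F : Finset α) (hf : ∀ x ∈ F, f x ≤ B) (hF : h ≤ ∑ x ∈ F, f x) :
    ∃ S ⊆ F, ∑ x ∈ S, f x ∈ Finset.Icc h B := by
  induction F using Finset.induction_on with
  | empty => exact ⟨∅, subset_rfl, by simp_all⟩
  | insert a F ha ih =>
    rw [Finset.sum_insert ha] at hF
    have hfF : ∀ x ∈ F, f x ≤ B := fun x hx => hf x (Finset.mem_insert_of_mem hx)
    by_cases hFh : h ≤ ∑ x ∈ F, f x
    · obtain ⟨S, hSF, hS⟩ := ih hfF hFh
      exact ⟨S, hSF.trans (Finset.subset_insert a F), hS⟩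
    by_cases hah : h ≤ f a
    · exact ⟨{a}, by simp, by simpa using ⟨hah, hf a (Finset.mem_insert_self a F)⟩⟩
    -- both `f a` and the rest are below `h`, so their sum is at most `2h - 2 ≤ B`
    · exact ⟨insert a F, subset_rfl, by rw [Finset.sum_insert ha, Finset.mem_Icc]; omega⟩

namespace RTree

variable {n : ℕ} (P : RTree n)

def ParentClosed (R : Finset (Fin n)) : Prop := ∀ x ∈ R, P.parent x ∈ R

/-- For a parent-closed `R`, the subtree at `v` of the tree induced on `R`. -/
noncomputable def subtreeIn (R : Finset (Fin n)) (v : Fin n) : Finset (Fin n) :=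
  R.filter (P.Anc v)

structure IsMicroTree (r : Fin n) (M : Finset (Fin n)) : Prop where
  root_mem : r ∈ M
  parent_mem : ∀ x ∈ M, x ≠ r → P.parent x ∈ M
  anc_mem : ∀ x ∈ M, P.Anc r x

/-- `L` lists the micro trees of a decomposition of `R` as pairs `(root, nodes)`. -/
structure IsDecomposition (s : ℕ) (R : Finset (Fin n)) (L : List (Fin n × Finset (Fin n))) :
    Prop where
  isMicroTree : ∀ p ∈ L, P.IsMicroTree p.1 p.2
  card_le : ∀ p ∈ L, p.2.card ≤ s
  subset : ∀ p ∈ L, p.2 ⊆ R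
  cover : ∀ v ∈ R, ∃ p ∈ L, v ∈ p.2
  pairwise : L.Pairwise fun p q => ∀ v ∈ p.2, v ∈ q.2 → v = p.1 ∨ v = q.1

variable {P}

theorem ParentClosed.mem_of_anc {R : Finset (Fin n)} (hR : P.ParentClosed R) {x y : Fin n}
    (hxy : P.Anc x y) (hy : y ∈ R) : x ∈ R := by
  obtain ⟨k, rfl⟩ := hxy
  induction k with
  | zero => exact hy
  | succ k ih => exact Function.iterate_succ_apply' P.parent k y ▸ hR _ ih

theorem ParentClosed.sdiff {R D : Finset (Fin n)} (hR : P.ParentClosed R)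
    (hD : ∀ x ∈ R, P.parent x ∈ D → x ∈ D) : P.ParentClosed (R \ D) := by
  intro x hx
  rw [Finset.mem_sdiff] at hx ⊢
  exact ⟨hR x hx.1, fun h => hx.2 (hD x hx.1 h)⟩

theorem subtreeIn_root (R : Finset (Fin n)) : P.subtreeIn R P.root = R :=
  Finset.filter_true_of_mem fun y _ => P.anc_root y

theorem card_subtreeIn_lt_of_isChild {R : Finset (Fin n)} {c v : Fin n} (hv : v ∈ R)
    (hc : P.IsChild c v) : (P.subtreeIn R c).card < (P.subtreeIn R v).card := by
  refine Finset.card_lt_card <| (Finset.ssubset_iff_of_subset fun y hy => ?_).2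
    ⟨v, Finset.mem_filter.2 ⟨hv, P.anc_refl v⟩, fun h => hc.not_anc (Finset.mem_filter.1 h).2⟩
  obtain ⟨hyR, hcy⟩ := Finset.mem_filter.1 hy
  exact Finset.mem_filter.2 ⟨hyR, hc.anc.trans hcy⟩

theorem ParentClosed.root_mem {R : Finset (Fin n)} (hR : P.ParentClosed R) (hne : R.Nonempty) :
    P.root ∈ R :=
  hR.mem_of_anc (P.anc_root _) hne.choose_spec

theorem exists_minimal_heavy {R : Finset (Fin n)} {s : ℕ} (hroot : P.root ∈ R)
    (hRs : s ≤ R.card) : ∃ v ∈ R, s ≤ (P.subtreeIn R v).card ∧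
      ∀ c ∈ R, P.IsChild c v → (P.subtreeIn R c).card < s := by
  obtain ⟨v, hv, hvmin⟩ := Finset.exists_min_image (R.filter fun v => s ≤ (P.subtreeIn R v).card)
    (fun v => (P.subtreeIn R v).card) ⟨P.root, Finset.mem_filter.2 ⟨hroot, by rwa [subtreeIn_root]⟩⟩
  obtain ⟨hvR, hvs⟩ := Finset.mem_filter.1 hv
  refine ⟨v, hvR, hvs, fun c hcR hc => ?_⟩
  by_contra! hcs
  exact (card_subtreeIn_lt_of_isChild hvR hc).not_ge (hvmin c (Finset.mem_filter.2 ⟨hcR, hcs⟩))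

theorem card_subtreeIn_le_sum_children {R : Finset (Fin n)} (hR : P.ParentClosed R) (v : Fin n) :
    (P.subtreeIn R v).card ≤ ∑ c ∈ R.filter (P.IsChild · v), (P.subtreeIn R c).card + 1 := by
  have hcover : P.subtreeIn R v ⊆
      insert v ((R.filter (P.IsChild · v)).biUnion (P.subtreeIn R)) := by
    intro y hy
    obtain ⟨hyR, hvy⟩ := Finset.mem_filter.1 hy
    rcases hvy.eq_or_exists_isChild with rfl | ⟨c, hc, hcy⟩
    · exact Finset.mem_insert_self _ _
    · exact Finset.mem_insert_of_mem <| Finset.mem_biUnion.2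
        ⟨c, Finset.mem_filter.2 ⟨hR.mem_of_anc hcy hyR, hc⟩, Finset.mem_filter.2 ⟨hyR, hcy⟩⟩
  calc (P.subtreeIn R v).card
      ≤ ((R.filter (P.IsChild · v)).biUnion (P.subtreeIn R)).card + 1 :=
        (Finset.card_le_card hcover).trans (Finset.card_insert_le _ _)
    _ ≤ _ := Nat.add_le_add_right Finset.card_biUnion_le 1

theorem card_biUnion_subtreeIn {R S : Finset (Fin n)} {v : Fin n}
    (hS : ∀ c ∈ S, P.IsChild c v) :
    (S.biUnion (P.subtreeIn R)).card = ∑ c ∈ S, (P.subtreeIn R c).card :=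
  Finset.card_biUnion fun c hc c' hc' hne => Finset.disjoint_left.2 fun _ hy hy' =>
    (hS c hc).disjoint_anc (hS c' hc') hne (Finset.mem_filter.1 hy).2 (Finset.mem_filter.1 hy').2

theorem isMicroTree_insert_biUnion_subtreeIn {R S : Finset (Fin n)} {v : Fin n}
    (hR : P.ParentClosed R) (hS : ∀ c ∈ S, P.IsChild c v) :
    P.IsMicroTree v (insert v (S.biUnion (P.subtreeIn R))) where
  root_mem := Finset.mem_insert_self _ _
  parent_mem x hx hxv := by
    obtain ⟨c, hc, hx⟩ := Finset.mem_biUnion.1 ((Finset.mem_insert.1 hx).resolve_left hxv)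
    obtain ⟨hxR, hcx⟩ := Finset.mem_filter.1 hx
    by_cases hxc : x = c
    · exact hxc ▸ (hS c hc).1 ▸ Finset.mem_insert_self _ _
    · exact Finset.mem_insert_of_mem <| Finset.mem_biUnion.2
        ⟨c, hc, Finset.mem_filter.2 ⟨hR x hxR, hcx.parent_of_ne hxc⟩⟩
  anc_mem x hx := by
    rcases Finset.mem_insert.1 hx with rfl | hx
    · exact P.anc_refl x
    · obtain ⟨c, hc, hx⟩ := Finset.mem_biUnion.1 hx
      exact (hS c hc).anc.trans (Finset.mem_filter.1 hx).2

theorem ParentClosed.sdiff_biUnion_subtreeIn {R : Finset (Fin n)} (hR : P.ParentClosed R)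
    (S : Finset (Fin n)) : P.ParentClosed (R \ S.biUnion (P.subtreeIn R)) :=
  hR.sdiff fun x hxR hx => by
    obtain ⟨c, hc, hx⟩ := Finset.mem_biUnion.1 hx
    exact Finset.mem_biUnion.2
      ⟨c, hc, Finset.mem_filter.2 ⟨hxR, (Finset.mem_filter.1 hx).2.trans (P.anc_parent x)⟩⟩

theorem ParentClosed.exists_isMicroTree {R : Finset (Fin n)} {s : ℕ} (hR : P.ParentClosed R)
    (hs : 0 < s) (hRs : s < R.card) :
    ∃ r M, P.IsMicroTree r M ∧ M ⊆ R ∧ M.card ≤ s ∧ s / 2 < M.card ∧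
      P.ParentClosed (R \ M.erase r) := by
  obtain ⟨v, hvR, hvs, hchild⟩ :=
    exists_minimal_heavy (hR.root_mem (Finset.card_pos.1 (by omega))) hRs.le
  obtain ⟨S, hSC, hS⟩ := Finset.exists_subset_sum_mem_Icc (fun c => (P.subtreeIn R c).card)
    (h := s / 2) (B := s - 1) (by omega) (R.filter (P.IsChild · v))
    (fun c hc => Nat.le_sub_one_of_lt
      (hchild c (Finset.mem_filter.1 hc).1 (Finset.mem_filter.1 hc).2))
    (by have := card_subtreeIn_le_sum_children hR v; omega)
  have hSv : ∀ c ∈ S, P.IsChild c v := fun c hc => (Finset.mem_filter.1 (hSC hc)).2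
  have hvD : v ∉ S.biUnion (P.subtreeIn R) := fun hv => by
    obtain ⟨c, hc, hv⟩ := Finset.mem_biUnion.1 hv
    exact (hSv c hc).not_anc (Finset.mem_filter.1 hv).2
  have hD := Finset.mem_Icc.1 (card_biUnion_subtreeIn (R := R) hSv ▸ hS)
  refine ⟨v, _, isMicroTree_insert_biUnion_subtreeIn hR hSv, ?_, ?_, ?_, ?_⟩
  · exact Finset.insert_subset hvR (Finset.biUnion_subset.2 fun c _ => Finset.filter_subset _ R)
  · rw [Finset.card_insert_of_notMem hvD]; omega
  · rw [Finset.card_insert_of_notMem hvD]; omega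
  · rw [Finset.erase_insert hvD]; exact hR.sdiff_biUnion_subtreeIn S

theorem isDecomposition_empty (s : ℕ) : P.IsDecomposition s ∅ [] where
  isMicroTree := by simp
  card_le := by simp
  subset := by simp
  cover := by simp
  pairwise := List.Pairwise.nil

theorem IsDecomposition.cons {s : ℕ} {R R' M : Finset (Fin n)} {r : Fin n}
    {L : List (Fin n × Finset (Fin n))} (hL : P.IsDecomposition s R' L) (hM : P.IsMicroTree r M)
    (hMs : M.card ≤ s) (hR : R = M ∪ R') (hMR' : ∀ v ∈ M, v ∈ R' → v = r) :
    P.IsDecomposition s R ((r, M) :: L) where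
  isMicroTree := List.forall_mem_cons.2 ⟨hM, hL.isMicroTree⟩
  card_le := List.forall_mem_cons.2 ⟨hMs, hL.card_le⟩
  subset := List.forall_mem_cons.2 ⟨hR ▸ Finset.subset_union_left,
    fun p hp => hR ▸ (hL.subset p hp).trans Finset.subset_union_right⟩
  cover v hv := by
    rcases Finset.mem_union.1 (hR ▸ hv) with hv | hv
    · exact ⟨_, List.mem_cons_self, hv⟩
    · obtain ⟨p, hp, hvp⟩ := hL.cover v hv
      exact ⟨p, List.mem_cons_of_mem _ hp, hvp⟩
  pairwise := List.pairwise_cons.2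
    ⟨fun p hp v hvM hvp => .inl (hMR' v hvM (hL.subset p hp hvp)), hL.pairwise⟩

theorem ParentClosed.exists_isDecomposition {s : ℕ} (hs : 1 < s) {R : Finset (Fin n)}
    (hR : P.ParentClosed R) :
    ∃ L, P.IsDecomposition s R L ∧ L.length * (s / 2) < R.card + s / 2 := by
  induction R using Finset.strongInduction with
  | H R ih =>
  by_cases hRs : R.card ≤ s
  · rcases R.eq_empty_or_nonempty with rfl | hne
    · exact ⟨[], isDecomposition_empty s, by simp; omega⟩
    · have hM : P.IsMicroTree P.root R :=
        ⟨hR.root_mem hne, fun x hx _ => hR x hx, fun x _ => P.anc_root x⟩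
      refine ⟨[(P.root, R)], (isDecomposition_empty s).cons hM hRs (by simp) (by simp), ?_⟩
      simpa using Finset.card_pos.2 hne
  · obtain ⟨r, M, hM, hMR, hMs, hMbig, hR'⟩ := hR.exists_isMicroTree (by omega) (not_le.1 hRs)
    have hsub : M.erase r ⊆ R := (Finset.erase_subset r M).trans hMR
    have hcard : (M.erase r).card = M.card - 1 := Finset.card_erase_of_mem hM.root_mem
    obtain ⟨L, hL, hlen⟩ :=
      ih _ (Finset.sdiff_ssubset hsub (Finset.card_pos.1 (by omega))) hR'
    refine ⟨(r, M) :: L, hL.cons hM hMs ?_ ?_, ?_⟩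
    · ext y
      have := @hMR y
      simp only [Finset.mem_union, Finset.mem_sdiff, Finset.mem_erase]
      tauto
    · intro v hvM hv
      by_contra hvr
      exact (Finset.mem_sdiff.1 hv).2 (Finset.mem_erase.2 ⟨hvr, hvM⟩)
    · rw [Finset.card_sdiff_of_subset hsub] at hlen
      have := Finset.card_le_card hsub
      simp only [List.length_cons, Nat.succ_mul]
      omega

end RTree

theorem Nat.le_four_mul_ceil_div_of_mul_half_lt {k n s : ℕ} (hs : 1 < s)
    (hk : k * (s / 2) < n + s / 2) : k ≤ 4 * ((n + s - 1) / s) := by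
  have hn : n ≤ (n + s - 1) / s * s := by
    have := Nat.lt_div_mul_add (a := n + s - 1) (by omega : 0 < s); omega
  set q := (n + s - 1) / s
  set h := s / 2
  have hq : q * s ≤ (3 * q) * h :=
    calc q * s ≤ q * (2 * h + 1) := Nat.mul_le_mul_left q (by omega)
      _ ≤ q * (3 * h) := Nat.mul_le_mul_left q (by omega)
      _ = (3 * q) * h := by ring
  have : k * h < (3 * q + 1) * h := by rw [Nat.succ_mul]; omega
  have := Nat.lt_of_mul_lt_mul_right this
  omega

/-- Gabow–Tarjan clustering (Lemma 8): every rooted tree on `n` nodes has, for any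
parameter `s > 1`, a micro tree decomposition into connected subtrees of size at most `s`,
any two of which intersect in at most one node which is a root of one of them, covering
all nodes, with at most `4⌈n/s⌉` micro trees. -/
theorem micro_tree_decomposition (n s : ℕ) (hs : 1 < s) (P : RTree n) :
    ∃ (k : ℕ) (M : Fin k → Finset (Fin n)) (r : Fin k → Fin n),
      (∀ i, r i ∈ M i) ∧
      (∀ i, ∀ x ∈ M i, x ≠ r i → P.parent x ∈ M i) ∧
      (∀ i, ∀ x ∈ M i, P.Anc (r i) x) ∧
      (∀ i, (M i).card ≤ s) ∧
      (∀ v, ∃ i, v ∈ M i) ∧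
      (∀ i j, i ≠ j → ∀ v, v ∈ M i → v ∈ M j → v = r i ∨ v = r j) ∧
      k ≤ 4 * ((n + s - 1) / s) := by
  obtain ⟨L, hL, hlen⟩ := RTree.ParentClosed.exists_isDecomposition hs
    (fun x _ => Finset.mem_univ (P.parent x) : P.ParentClosed Finset.univ)
  have hmem (i : Fin L.length) : L[i] ∈ L := List.getElem_mem i.2
  refine ⟨L.length, fun i => L[i].2, fun i => L[i].1,
    fun i => (hL.isMicroTree _ (hmem i)).root_mem, fun i => (hL.isMicroTree _ (hmem i)).parent_mem,
    fun i => (hL.isMicroTree _ (hmem i)).anc_mem, fun i => hL.card_le _ (hmem i),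
    fun v => ?_, fun i j hij => ?_, ?_⟩
  · obtain ⟨p, hp, hvp⟩ := hL.cover v (Finset.mem_univ v)
    obtain ⟨i, hi, rfl⟩ := List.mem_iff_getElem.1 hp
    exact ⟨⟨i, hi⟩, hvp⟩
  · have hpw := List.pairwise_iff_getElem.1 hL.pairwise
    rcases Fin.lt_or_lt_of_ne hij with h | h
    · exact hpw i j i.2 j.2 h
    · exact fun v hi hj => (hpw j i j.2 i.2 h v hj hi).symm
  · exact Nat.le_four_mul_ceil_div_of_mul_half_lt hs (by simpa using hlen)
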